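/- arXiv:2009.04738 — 7 statements merged into one kernel-verified Lean document; each statement's English description precedes it below -/
import Mathlib

section
/- Let α ≥ 1 and n ≥ 2α + 1. If G is a graph on n vertices with matching number α'(G) = α, then the number of edges of G is at most max{ C(2α+1, 2), αn - α(α+1)/2 }. -/
open Matrix

noncomputable section
open scoped Classical

/-- The complete split graph `S_{n,k} = K_k ∇ (n-k)K_1`. -/
def splitGraph (n k : ℕ) : SimpleGraph (Fin n) where
  Adj i j := i ≠ j ∧ (i.val < k ∨ j.val < k)
  symm := ⟨fun i j h => ⟨h.1.symm, h.2.symm⟩⟩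
  loopless := ⟨fun i h => h.1 rfl⟩

/-- The graph `K_m ∪ (n-m)K_1`: a clique on the first `m` vertices plus isolated vertices. -/
def cliqueUnion (n m : ℕ) : SimpleGraph (Fin n) where
  Adj i j := i ≠ j ∧ i.val < m ∧ j.val < m
  symm := ⟨fun i j h => ⟨h.1.symm, h.2.2, h.2.1⟩⟩
  loopless := ⟨fun i h => h.1 rfl⟩

/-- The `k`-fan `F_k = K_1 ∇ kK_2`: vertex `0` is the common center, and for `m < k` the
vertices `2m+1, 2m+2` form the `m`-th edge of the matching joined to the center. -/
def fan (k : ℕ) : SimpleGraph (Fin (2 * k + 1)) where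
  Adj i j := i ≠ j ∧ (i = 0 ∨ j = 0 ∨ (i.val - 1) / 2 = (j.val - 1) / 2)
  symm := by
    constructor
    rintro i j ⟨h1, h2⟩
    refine ⟨h1.symm, ?_⟩
    rcases h2 with h | h | h
    · exact Or.inr (Or.inl h)
    · exact Or.inl h
    · exact Or.inr (Or.inr h.symm)
  loopless := ⟨fun i h => h.1 rfl⟩

/-- `G` contains a (not necessarily induced) subgraph isomorphic to `H`. -/
def ContainsSub {V W : Type*} (G : SimpleGraph V) (H : SimpleGraph W) : Prop :=
  ∃ f : W → V, Function.Injective f ∧ ∀ a b, H.Adj a b → G.Adj (f a) (f b)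

/-- `G` is `F_k`-free. -/
def FanFree {V : Type*} (G : SimpleGraph V) (k : ℕ) : Prop := ¬ ContainsSub G (fan k)

/-- `G` contains `k` pairwise disjoint edges. -/
def HasMatching {V : Type*} (G : SimpleGraph V) (k : ℕ) : Prop :=
  ∃ p : Fin k → V × V, (∀ i, G.Adj (p i).1 (p i).2) ∧
    ∀ i j, i ≠ j → (p i).1 ≠ (p j).1 ∧ (p i).1 ≠ (p j).2 ∧
      (p i).2 ≠ (p j).1 ∧ (p i).2 ≠ (p j).2

/-- The signless Laplacian matrix `Q(G) = D(G) + A(G)`. -/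
def signlessLaplacian {V : Type*} [Fintype V] (G : SimpleGraph V) : Matrix V V ℝ :=
  Matrix.of fun i j =>
    (if i = j then ((G.neighborSet i).ncard : ℝ) else 0) + (if G.Adj i j then 1 else 0)

/-- The signless Laplacian spectral radius `q_1(G)`: the largest eigenvalue of `Q(G)`. -/
def q1 {V : Type*} [Fintype V] (G : SimpleGraph V) : ℝ :=
  sSup (spectrum ℝ (signlessLaplacian G))

/-- The largest eigenvalue of a real matrix. -/
def lam1 {m : Type*} [Fintype m] [DecidableEq m] (M : Matrix m m ℝ) : ℝ :=
  sSup (spectrum ℝ M)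

/-!
Shifting. View the edges as `2`-subsets of `{0, …, n-1}`. The shift replacing `j` by `i < j` in
every edge where this creates a new edge (the UV-compression with `u = {i}`, `v = {j}`) keeps the
number of edges and creates no new large matching: if a matching of the shifted family leaves
the old one, exactly one of its edges contains `i`, and the transposition `(i j)` moves the whole
matching back into the old family. Shifts decrease the sum of all labels, so we may assume the
family is shifted, i.e. closed under lowering either end of an edge. The `a + 1` disjoint pairs
`{r, 2a+1-r}`, `r ≤ a`, cannot all be edges; if `{r, 2a+1-r}` is missing, every edge `{x < y}`
has `x < r` or `y < 2a+1-r`. Counting such pairs gives `C(n,2) - C(n-r,2) + C(2a+1-2r,2)`, which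
is convex in `r` and hence at most its value at `r = 0` or `r = a`.
-/

open Finset UV Function
open scoped FinsetFamily

namespace ErdosGallai

section Matching

variable {α : Type*} [DecidableEq α]

def HasDisjointMembers (𝒜 : Finset (Finset α)) (k : ℕ) : Prop :=
  ∃ f : Fin k → Finset α, (∀ r, f r ∈ 𝒜) ∧ Pairwise (Disjoint on f)

lemma map_swap_eq_self {i j : α} {A : Finset α} (hi : i ∉ A) (hj : j ∉ A) :
    A.map (Equiv.swap i j).toEmbedding = A := by
  ext x
  simp only [mem_map_equiv, Equiv.symm_swap, Equiv.swap_apply_def]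
  grind

lemma map_swap_eq_sup_sdiff {i j : α} {A : Finset α} (hi : i ∉ A) (hj : j ∈ A) :
    A.map (Equiv.swap i j).toEmbedding = (A ⊔ {i}) \ {j} := by
  ext x
  simp only [mem_map_equiv, Equiv.symm_swap, Equiv.swap_apply_def, sup_eq_union, mem_sdiff,
    mem_union, mem_singleton]
  grind

lemma map_swap_mem_of_mem_compression {𝒜 : Finset (Finset α)} {i j : α} {A : Finset α}
    (hA : A ∈ 𝓒 {i} {j} 𝒜) (h : i ∉ A ∨ A ∉ 𝒜) : A.map (Equiv.swap i j).toEmbedding ∈ 𝒜 := by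
  by_cases hA𝒜 : A ∈ 𝒜
  · have hi : i ∉ A := h.resolve_right (not_not.2 hA𝒜)
    by_cases hj : j ∈ A
    · rw [map_swap_eq_sup_sdiff hi hj]
      exact sup_sdiff_mem_of_mem_compression hA (singleton_subset_iff.2 hj)
        (disjoint_singleton_left.2 hi)
    · rwa [map_swap_eq_self hi hj]
  · have hi : i ∈ A := singleton_subset_iff.1 (le_of_mem_compression_of_notMem hA hA𝒜)
    have hj : j ∉ A := disjoint_singleton_left.1 (disjoint_of_mem_compression_of_notMem hA hA𝒜)
    rw [Equiv.swap_comm, map_swap_eq_sup_sdiff hj hi]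
    exact sup_sdiff_mem_of_mem_compression_of_notMem hA hA𝒜

theorem HasDisjointMembers.of_compression {𝒜 : Finset (Finset α)} {i j : α} {k : ℕ}
    (h : HasDisjointMembers (𝓒 {i} {j} 𝒜) k) : HasDisjointMembers 𝒜 k := by
  obtain ⟨f, hf, hdisj⟩ := h
  by_cases hsub : ∀ r, f r ∈ 𝒜
  · exact ⟨f, hsub, hdisj⟩
  obtain ⟨r₀, hr₀⟩ := not_forall.1 hsub
  have hi : i ∈ f r₀ := singleton_subset_iff.1 (le_of_mem_compression_of_notMem (hf r₀) hr₀)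
  refine ⟨fun r ↦ (f r).map (Equiv.swap i j).toEmbedding, fun r ↦ ?_,
    fun r s hrs ↦ (disjoint_map _).2 (hdisj hrs)⟩
  obtain rfl | hr := eq_or_ne r r₀
  · exact map_swap_mem_of_mem_compression (hf r) (Or.inr hr₀)
  · exact map_swap_mem_of_mem_compression (hf r)
      (Or.inl fun hir ↦ disjoint_left.1 (hdisj hr) hir hi)

end Matching

section Shifted

variable {α : Type*} [LinearOrder α] {𝒜 : Finset (Finset α)}

def IsShifted (𝒜 : Finset (Finset α)) : Prop :=
  ∀ ⦃i j : α⦄, i < j → IsCompressed {i} {j} 𝒜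

lemma IsShifted.pair_mem_of_le {x y z : α} (h𝒜 : IsShifted 𝒜) (hxy : {x, y} ∈ 𝒜) (hyx : y ≠ x)
    (hzy : z ≤ y) (hzx : z ≠ x) : {x, z} ∈ 𝒜 := by
  obtain rfl | hzy := hzy.eq_or_lt
  · exact hxy
  have hmem := sup_sdiff_mem_of_mem_compression (by rwa [(h𝒜 hzy).eq]) (by simp)
    (by simp [hzx, hzy.ne] : Disjoint {z} ({x, y} : Finset α))
  convert hmem using 1
  ext w
  simp only [mem_insert, mem_singleton, sup_eq_union, mem_sdiff, mem_union]
  grind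

lemma IsShifted.pair_mem_of_le_of_le {x y x' y' : α} (h𝒜 : IsShifted 𝒜) (hmem : {x, y} ∈ 𝒜)
    (hxy : x < y) (hx : x' ≤ x) (hy : y' ≤ y) (hxy' : x' < y') : {x', y'} ∈ 𝒜 := by
  have hx'y : {x', y} ∈ 𝒜 := by
    rw [pair_comm] at hmem ⊢
    exact h𝒜.pair_mem_of_le hmem hxy.ne hx (hx.trans_lt hxy).ne
  exact h𝒜.pair_mem_of_le hx'y (hx.trans_lt hxy).ne' hy hxy'.ne'

end Shifted

section Weight

def weight (𝒜 : Finset (Finset ℕ)) : ℕ := ∑ A ∈ 𝒜, ∑ x ∈ A, x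

lemma sum_compress_lt {i j : ℕ} {A : Finset ℕ} (hij : i < j) (h : compress {i} {j} A ≠ A) :
    ∑ x ∈ compress {i} {j} A, x < ∑ x ∈ A, x := by
  unfold compress at h ⊢
  split_ifs at h ⊢ with hA
  · obtain ⟨hi, hj⟩ := hA
    rw [disjoint_singleton_left] at hi
    rw [singleton_subset_iff] at hj
    have : (A ⊔ {i}) \ {j} = insert i (A.erase j) := by
      ext x; simp only [sup_eq_union, mem_sdiff, mem_union, mem_singleton, mem_insert, mem_erase]
      grind
    rw [this, sum_insert (fun h ↦ hi (mem_of_mem_erase h)), ← add_sum_erase _ _ hj]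
    omega
  · exact absurd rfl h

lemma weight_compression_lt {i j : ℕ} {𝒜 : Finset (Finset ℕ)} (hij : i < j)
    (h : 𝓒 {i} {j} 𝒜 ≠ 𝒜) : weight (𝓒 {i} {j} 𝒜) < weight 𝒜 := by
  rw [compression] at h ⊢
  have hsplit : {A ∈ 𝒜 | compress {i} {j} A ∈ 𝒜} ∪ {A ∈ 𝒜 | compress {i} {j} A ∉ 𝒜} = 𝒜 :=
    filter_union_filter_not_eq _ _
  have hne : {A ∈ 𝒜 | compress {i} {j} A ∉ 𝒜}.Nonempty := by
    contrapose! h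
    rw [filter_image, h, image_empty, union_empty]
    rwa [h, union_empty] at hsplit
  rw [weight, weight, sum_union compress_disjoint]
  conv_rhs => rw [← hsplit]
  rw [sum_union (disjoint_filter_filter_not _ _ _), add_lt_add_iff_left, filter_image,
    sum_image compress_injOn]
  refine sum_lt_sum_of_nonempty hne fun A hA ↦ sum_compress_lt hij ?_
  grind

theorem exists_isShifted (P : Finset (Finset ℕ) → Prop)
    (hP : ∀ ⦃ℬ : Finset (Finset ℕ)⦄ ⦃i j : ℕ⦄, i < j → P ℬ → P (𝓒 {i} {j} ℬ))
    (𝒜 : Finset (Finset ℕ)) (h𝒜 : P 𝒜) : ∃ ℬ, IsShifted ℬ ∧ #ℬ = #𝒜 ∧ P ℬ := by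
  by_cases hshift : IsShifted 𝒜
  · exact ⟨𝒜, hshift, rfl, h𝒜⟩
  obtain ⟨i, j, hij, hne⟩ : ∃ i j, i < j ∧ 𝓒 {i} {j} 𝒜 ≠ 𝒜 := by
    simpa [IsShifted, IsCompressed] using hshift
  have := weight_compression_lt hij hne
  obtain ⟨ℬ, hℬ, hcard, hPℬ⟩ := exists_isShifted P hP _ (hP hij h𝒜)
  exact ⟨ℬ, hℬ, hcard.trans (card_compression _ _ _), hPℬ⟩
termination_by weight 𝒜

lemma compression_subset_powersetCard_range {𝒜 : Finset (Finset ℕ)} {i j n r : ℕ} (hij : i < j)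
    (h𝒜 : 𝒜 ⊆ powersetCard r (range n)) : 𝓒 {i} {j} 𝒜 ⊆ powersetCard r (range n) := by
  intro A hA
  rw [mem_compression] at hA
  obtain ⟨hA, -⟩ | ⟨-, B, hB, rfl⟩ := hA
  · exact h𝒜 hA
  have hB' := mem_powersetCard.1 (h𝒜 hB)
  refine mem_powersetCard.2 ⟨?_, (card_compress (by simp) B).trans hB'.2⟩
  unfold compress
  split_ifs with hc
  · intro x hx
    simp only [sup_eq_union, mem_sdiff, mem_union, mem_singleton] at hx
    rcases hx with ⟨hx | rfl, -⟩
    · exact hB'.1 hx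
    · exact mem_range.2 (hij.trans (mem_range.1 (hB'.1 (singleton_subset_iff.1 hc.2))))
  · exact hB'.1

end Weight

section Counting

variable {𝒜 : Finset (Finset ℕ)} {a n : ℕ}

lemma exists_pair_notMem (h𝒜 : ¬ HasDisjointMembers 𝒜 (a + 1)) :
    ∃ r ≤ a, {r, 2 * a + 1 - r} ∉ 𝒜 := by
  by_contra! hall
  refine h𝒜 ⟨fun r ↦ {(r : ℕ), 2 * a + 1 - r}, fun r ↦ hall r (by omega), fun r s hrs ↦ ?_⟩
  have : (r : ℕ) ≠ s := Fin.val_injective.ne hrs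
  simp only [onFun, disjoint_insert_left, disjoint_insert_right, mem_insert, mem_singleton,
    disjoint_singleton]
  omega

lemma exists_lt_of_mem_powersetCard_two {A : Finset ℕ} (hA : A ∈ powersetCard 2 (range n)) :
    ∃ x y, x < y ∧ y < n ∧ A = {x, y} := by
  obtain ⟨hAn, hA2⟩ := mem_powersetCard.1 hA
  obtain ⟨x, y, hxy, rfl⟩ := card_eq_two.1 hA2
  have hx : x < n := mem_range.1 (hAn (by simp))
  have hy : y < n := mem_range.1 (hAn (by simp))
  rcases hxy.lt_or_gt with h | h
  · exact ⟨x, y, h, hy, rfl⟩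
  · exact ⟨y, x, h, hx, pair_comm x y⟩

lemma IsShifted.subset_of_pair_notMem {r s : ℕ} (h𝒜 : IsShifted 𝒜)
    (hsub : 𝒜 ⊆ powersetCard 2 (range n)) (hrs : r < s) (hnot : {r, s} ∉ 𝒜) :
    𝒜 ⊆ (powersetCard 2 (range n) \ powersetCard 2 (Ico r n)) ∪ powersetCard 2 (Ico r s) := by
  intro A hA
  obtain ⟨x, y, hxy, hyn, rfl⟩ := exists_lt_of_mem_powersetCard_two (hsub hA)
  have : x < r ∨ y < s := by
    by_contra! h
    exact hnot (h𝒜.pair_mem_of_le_of_le hA hxy h.1 h.2 hrs)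
  simp only [mem_union, mem_sdiff, mem_powersetCard, insert_subset_iff, singleton_subset_iff,
    mem_range, mem_Ico, card_pair hxy.ne, and_true]
  omega

lemma card_le_of_subset_sdiff_union {r s : ℕ}
    (h : 𝒜 ⊆ (powersetCard 2 (range n) \ powersetCard 2 (Ico r n)) ∪ powersetCard 2 (Ico r s)) :
    #𝒜 ≤ n.choose 2 - (n - r).choose 2 + (s - r).choose 2 := by
  have hIco : Ico r n ⊆ range n := range_eq_Ico n ▸ Ico_subset_Ico_left r.zero_le
  grw [card_le_card h, card_union_le, card_sdiff_of_subset (powersetCard_mono hIco)]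
  simp

end Counting

lemma quadratic_le_max {K : Type*} [CommRing K] [LinearOrder K] [IsStrictOrderedRing K]
    {c b d x a : K} (hc : 0 ≤ c) (hx : 0 ≤ x) (hxa : x ≤ a) :
    c * x ^ 2 + b * x + d ≤ max d (c * a ^ 2 + b * a + d) := by
  rcases le_total (c * x + b) 0 with h | h
  · exact le_max_of_le_left (by nlinarith)
  · exact le_max_of_le_right (by nlinarith [mul_le_mul_of_nonneg_left hxa hc])

lemma choose_two_sub_add_choose_two_le {a n r : ℕ} (hra : r ≤ a) (han : a ≤ n) :
    n.choose 2 - (n - r).choose 2 + (2 * a + 1 - 2 * r).choose 2 ≤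
      max ((2 * a + 1).choose 2) (a * n - a * (a + 1) / 2) := by
  have hrn : r ≤ n := hra.trans han
  have htri : a * (a + 1) / 2 = (a + 1).choose 2 := by
    rw [Nat.choose_two_right, mul_comm, Nat.add_sub_cancel]
  have htri_le : (a + 1).choose 2 ≤ a * n := by
    rw [← htri]
    obtain rfl | ha := a.eq_zero_or_pos
    · simp
    · exact Nat.div_le_of_le_mul (by nlinarith)
  have key := quadratic_le_max (c := (3 / 2 : ℝ)) (b := n - 4 * a - 3 / 2) (d := a * (2 * a + 1))
    (by norm_num) (Nat.cast_nonneg r) (Nat.cast_le.2 hra)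
  rw [htri]
  rify [Nat.choose_le_choose 2 (n.sub_le r), htri_le]
  simp only [Nat.cast_choose_two]
  rw [Nat.cast_sub hrn, Nat.cast_sub (by omega : 2 * r ≤ 2 * a + 1)]
  push_cast
  refine le_of_eq_of_le ?_ (key.trans_eq ?_)
  · ring
  · congr 1 <;> ring

section EdgeFamily

variable {n : ℕ} (G : SimpleGraph (Fin n))

def edgeFamily : Finset (Finset ℕ) := G.edgeFinset.image fun e ↦ (e.map Fin.val).toFinset

lemma mem_edgeFamily {A : Finset ℕ} :
    A ∈ edgeFamily G ↔ ∃ u v, G.Adj u v ∧ A = {(u : ℕ), (v : ℕ)} := by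
  simp only [edgeFamily, mem_image, Sym2.exists, SimpleGraph.mem_edgeFinset,
    SimpleGraph.mem_edgeSet, Sym2.map_mk, Sym2.toFinset_mk_eq, eq_comm]

lemma card_edgeFamily : #(edgeFamily G) = G.edgeSet.ncard := by
  have hinj : Function.Injective fun z : Sym2 ℕ ↦ z.toFinset := fun z w (h : z.toFinset = _) ↦
    Sym2.ext fun x ↦ by rw [← Sym2.mem_toFinset, h, Sym2.mem_toFinset]
  rw [edgeFamily, card_image_of_injective _ <| show Function.Injective fun e : Sym2 (Fin n) ↦
    (e.map Fin.val).toFinset from hinj.comp (Sym2.map.injective Fin.val_injective),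
    ← Set.ncard_coe_finset, SimpleGraph.coe_edgeFinset]

lemma edgeFamily_subset : edgeFamily G ⊆ powersetCard 2 (range n) := by
  intro A hA
  obtain ⟨u, v, huv, rfl⟩ := (mem_edgeFamily G).1 hA
  rw [mem_powersetCard, card_pair (Fin.val_injective.ne huv.ne)]
  simp [insert_subset_iff]

variable {G} in
lemma HasDisjointMembers.hasMatching {k : ℕ} (h : HasDisjointMembers (edgeFamily G) k) :
    HasMatching G k := by
  obtain ⟨f, hf, hdisj⟩ := h
  choose u v huv hfuv using fun r ↦ (mem_edgeFamily G).1 (hf r)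
  refine ⟨fun r ↦ (u r, v r), huv, fun r s hrs ↦ ?_⟩
  have := hdisj hrs
  simp only [Function.onFun, hfuv, disjoint_insert_left, disjoint_insert_right, mem_insert,
    mem_singleton, disjoint_singleton, Fin.val_inj] at this
  tauto

end EdgeFamily

end ErdosGallai

theorem stmt6_general {n a : ℕ} (hn : 2 * a + 1 ≤ n) (G : SimpleGraph (Fin n))
    (hnomatch : ¬ HasMatching G (a + 1)) :
    G.edgeSet.ncard ≤ max (Nat.choose (2 * a + 1) 2) (a * n - a * (a + 1) / 2) := by
  open ErdosGallai in
  obtain ⟨ℬ, hshift, hcard, hsub, hℬ⟩ := exists_isShifted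
    (fun ℬ ↦ ℬ ⊆ powersetCard 2 (range n) ∧ ¬ HasDisjointMembers ℬ (a + 1))
    (fun _ _ _ hij h ↦
      ⟨compression_subset_powersetCard_range hij h.1, fun h' ↦ h.2 h'.of_compression⟩)
    (edgeFamily G) ⟨edgeFamily_subset G, fun h ↦ hnomatch h.hasMatching⟩
  obtain ⟨r, hra, hr⟩ := exists_pair_notMem hℬ
  have hcover := hshift.subset_of_pair_notMem hsub (by omega) hr
  rw [← card_edgeFamily, ← hcard]
  calc #ℬ ≤ _ := card_le_of_subset_sdiff_union hcover
    _ = n.choose 2 - (n - r).choose 2 + (2 * a + 1 - 2 * r).choose 2 := by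
      rw [show 2 * a + 1 - r - r = 2 * a + 1 - 2 * r by omega]
    _ ≤ _ := choose_two_sub_add_choose_two_le hra (by omega)

/-- if `α ≥ 1`, `n ≥ 2α + 1` and `G` has `n` vertices and matching number `α`,
then `e(G) ≤ max{C(2α+1,2), αn - α(α+1)/2}`. -/
theorem stmt6 {n a : ℕ} (ha : 1 ≤ a) (hn : 2 * a + 1 ≤ n) (G : SimpleGraph (Fin n))
    (hmatch : HasMatching G a) (hnomatch : ¬ HasMatching G (a + 1)) :
    G.edgeSet.ncard ≤ max (Nat.choose (2 * a + 1) 2) (a * n - a * (a + 1) / 2) :=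
  stmt6_general hn G hnomatch

end
end

section
/- Let k ≥ 2 and n ≥ (5k - 2)/2. If G is a graph on n vertices containing no matching of size k (i.e., G is kK_2-free), then e(G) ≤ (k-1)n - k(k-1)/2. -/
open Matrix

noncomputable section
open scoped Classical

/-!
Induction on `k`. If some edge `uv` has `d(u) + d(v) ≤ n + k - 2`, then `G - u - v` has no
`(k-1)`-matching and at least `e(G) - (n + k - 3)` edges, and the bound for `n - 2` vertices
gives the bound for `n`. Otherwise every non-isolated vertex has degree at least `k`. Take a
maximum matching `M`, of size `s < k`, and let `W` be the non-isolated vertices it misses: they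
are adjacent only to matched vertices, and if `|W| ≥ 2` no edge `ab` of `M` has `a` and `b`
adjacent to distinct vertices of `W` (that would give an augmenting path), so `ab` receives at
most `|W|` edges from `W`, whence `k|W| ≤ s|W|`. So `|W| ≤ 1`, all edges lie among `2k - 1`
vertices, and `C(2k - 1, 2) ≤ (k-1)n - k(k-1)/2` exactly when `2n ≥ 5k - 2`.
-/

open Finset

lemma Finset.card_add_card_le_of_forall_eq {α : Type*} {A B W : Finset α} (hA : A ⊆ W)
    (hB : B ⊆ W) (hW : 1 < #W) (h : ∀ a ∈ A, ∀ b ∈ B, a = b) : #A + #B ≤ #W := by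
  rcases A.eq_empty_or_nonempty with rfl | ⟨a, ha⟩
  · simpa using card_le_card hB
  rcases B.eq_empty_or_nonempty with rfl | ⟨b, hb⟩
  · simpa using card_le_card hA
  have hA1 : #A ≤ 1 := card_le_one.2 fun x hx y hy => (h x hx b hb).trans (h y hy b hb).symm
  have hB1 : #B ≤ 1 := card_le_one.2 fun x hx y hy => (h a ha x hx).symm.trans (h a ha y hy)
  omega

namespace SimpleGraph

variable {V : Type*} {G H : SimpleGraph V} {s : ℕ} {p : Fin s → V × V}

/-- `HasMatching G s` unfolds to `∃ p, G.IsMatchingFamily p`. -/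
def IsMatchingFamily (G : SimpleGraph V) (p : Fin s → V × V) : Prop :=
  (∀ i, G.Adj (p i).1 (p i).2) ∧ ∀ i j, i ≠ j → (p i).1 ≠ (p j).1 ∧ (p i).1 ≠ (p j).2 ∧
    (p i).2 ≠ (p j).1 ∧ (p i).2 ≠ (p j).2

lemma hasMatching_zero (G : SimpleGraph V) : HasMatching G 0 :=
  ⟨Fin.elim0, fun i => i.elim0, fun i => i.elim0⟩

lemma IsMatchingFamily.mono (hp : G.IsMatchingFamily p) (h : G ≤ H) : H.IsMatchingFamily p :=
  ⟨fun i => h (hp.1 i), hp.2⟩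

def matchedVerts (p : Fin s → V × V) : Finset V := univ.biUnion fun i => {(p i).1, (p i).2}

lemma mem_matchedVerts {x : V} : x ∈ matchedVerts p ↔ ∃ i, x = (p i).1 ∨ x = (p i).2 := by
  simp [matchedVerts]

lemma IsMatchingFamily.sum_matchedVerts {M : Type*} [AddCommMonoid M] (hp : G.IsMatchingFamily p)
    (f : V → M) : ∑ x ∈ matchedVerts p, f x = ∑ i, (f (p i).1 + f (p i).2) := by
  rw [matchedVerts, sum_biUnion]
  · exact sum_congr rfl fun i _ => sum_pair (hp.1 i).ne
  · intro i _ j _ hij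
    have := hp.2 i j hij
    simp only [Function.onFun, disjoint_insert_left, disjoint_insert_right, mem_insert,
      mem_singleton, disjoint_singleton]
    tauto

lemma IsMatchingFamily.card_matchedVerts (hp : G.IsMatchingFamily p) :
    #(matchedVerts p) = 2 * s := by
  rw [card_eq_sum_ones, hp.sum_matchedVerts]
  simp [mul_comm]

lemma IsMatchingFamily.matchedVerts_subset_support (hp : G.IsMatchingFamily p) :
    ↑(matchedVerts p) ⊆ G.support := by
  intro x hx
  obtain ⟨i, rfl | rfl⟩ := mem_matchedVerts.1 hx
  exacts [⟨_, hp.1 i⟩, ⟨_, (hp.1 i).symm⟩]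

lemma IsMatchingFamily.snoc (hp : G.IsMatchingFamily p) {u v : V} (huv : G.Adj u v)
    (hu : u ∉ matchedVerts p) (hv : v ∉ matchedVerts p) :
    G.IsMatchingFamily (Fin.snoc p (u, v) : Fin (s + 1) → V × V) := by
  simp only [mem_matchedVerts, not_exists, not_or] at hu hv
  refine ⟨fun i => ?_, fun i j hij => ?_⟩
  · induction i using Fin.lastCases <;> simp [huv, hp.1]
  · induction i using Fin.lastCases <;> induction j using Fin.lastCases <;>
      simp_all [Ne.symm, hp.2]

lemma IsMatchingFamily.hasMatching_succ_of_augmentingPath (hp : G.IsMatchingFamily p) (i : Fin s)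
    {w₁ w₂ : V} (hw : w₁ ≠ w₂) (h₁ : G.Adj w₁ (p i).1) (h₂ : G.Adj (p i).2 w₂)
    (hw₁ : w₁ ∉ matchedVerts p) (hw₂ : w₂ ∉ matchedVerts p) : HasMatching G (s + 1) := by
  obtain ⟨hadj, hdisj⟩ := hp
  have hpi := (hadj i).ne
  simp only [mem_matchedVerts, not_exists, not_or] at hw₁ hw₂
  set q := Function.update p i (w₁, (p i).1)
  have hq : G.IsMatchingFamily q := by
    refine ⟨fun j => ?_, fun j l hjl => ?_⟩
    · by_cases hj : j = i <;> simp_all [q]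
    · by_cases hj : j = i <;> by_cases hl : l = i <;> simp_all [q, Ne.symm]
  refine ⟨_, hq.snoc h₂ ?_ ?_⟩ <;> simp only [mem_matchedVerts, not_exists] <;> intro j <;>
    by_cases hj : j = i <;> simp_all [q, Ne.symm]

lemma exists_hasMatching_not_hasMatching_succ :
    ∀ {k : ℕ}, ¬HasMatching G k → ∃ s < k, HasMatching G s ∧ ¬HasMatching G (s + 1)
  | 0, h => absurd (hasMatching_zero G) h
  | k + 1, h => by
    by_cases hk : HasMatching G k
    · exact ⟨k, k.lt_succ_self, hk, h⟩
    · obtain ⟨s, hs, hmax⟩ := exists_hasMatching_not_hasMatching_succ hk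
      exact ⟨s, hs.trans k.lt_succ_self, hmax⟩

lemma sum_degree_eq_sum_card_filter_adj [Fintype V] [DecidableRel G.Adj] {U W : Finset V}
    (hW : ∀ w ∈ W, G.neighborFinset w ⊆ U) :
    ∑ w ∈ W, G.degree w = ∑ x ∈ U, #{w ∈ W | G.Adj w x} := by
  refine .trans ?_ (sum_card_bipartiteAbove_eq_sum_card_bipartiteBelow G.Adj)
  refine sum_congr rfl fun w hw => ?_
  rw [← card_neighborFinset_eq_degree]
  congr 1
  ext x
  simp only [mem_bipartiteAbove, mem_neighborFinset]
  exact ⟨fun h => ⟨hW w hw (by simpa using h), h⟩, And.right⟩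

lemma IsMatchingFamily.card_support_sdiff_matchedVerts_le_one [Fintype V] [DecidableRel G.Adj]
    (hp : G.IsMatchingFamily p) (hmax : ¬HasMatching G (s + 1))
    (hdeg : ∀ w ∈ G.support, s < G.degree w) :
    #(G.support.toFinset \ matchedVerts p) ≤ 1 := by
  set W := G.support.toFinset \ matchedVerts p
  by_contra! hW
  have hNU : ∀ w ∈ W, G.neighborFinset w ⊆ matchedVerts p := by
    intro w hw x hx
    by_contra hx'
    exact hmax ⟨_, hp.snoc ((G.mem_neighborFinset _ _).1 hx) (mem_sdiff.1 hw).2 hx'⟩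
  have hpair (i : Fin s) : #{w ∈ W | G.Adj w (p i).1} + #{w ∈ W | G.Adj w (p i).2} ≤ #W := by
    refine card_add_card_le_of_forall_eq (filter_subset _ _) (filter_subset _ _) hW ?_
    intro w₁ h₁ w₂ h₂
    by_contra hne
    rw [mem_filter] at h₁ h₂
    exact hmax (hp.hasMatching_succ_of_augmentingPath i hne h₁.2 h₂.2.symm
      (mem_sdiff.1 h₁.1).2 (mem_sdiff.1 h₂.1).2)
  have : (s + 1) * #W ≤ s * #W :=
    calc (s + 1) * #W ≤ ∑ w ∈ W, G.degree w := by
          rw [mul_comm, ← smul_eq_mul]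
          exact card_nsmul_le_sum _ _ _ fun w hw => hdeg w (by simpa using (mem_sdiff.1 hw).1)
      _ = ∑ i, (#{w ∈ W | G.Adj w (p i).1} + #{w ∈ W | G.Adj w (p i).2}) := by
          rw [sum_degree_eq_sum_card_filter_adj hNU, hp.sum_matchedVerts]
      _ ≤ ∑ _i : Fin s, #W := sum_le_sum fun i _ => hpair i
      _ = s * #W := by simp
  rw [add_one_mul] at this
  omega

lemma card_edgeFinset_le_choose_card_support [Fintype V] [DecidableRel G.Adj] :
    #G.edgeFinset ≤ (#G.support.toFinset).choose 2 := by
  rw [← card_edgeFinset_induce_support, Set.toFinset_card]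
  exact card_edgeFinset_le_card_choose_two

lemma card_edgeFinset_le_of_not_hasMatching_of_lt_degree [Fintype V] [DecidableRel G.Adj]
    {k : ℕ} (hk : ¬HasMatching G (k + 1)) (hdeg : ∀ w ∈ G.support, k < G.degree w) :
    #G.edgeFinset ≤ (2 * k + 1).choose 2 := by
  obtain ⟨s, hs, ⟨p, hp : G.IsMatchingFamily p⟩, hmax⟩ :=
    exists_hasMatching_not_hasMatching_succ hk
  have hsupp : #G.support.toFinset ≤ 2 * k + 1 :=
    calc #G.support.toFinset ≤ #(G.support.toFinset \ matchedVerts p) + #(matchedVerts p) :=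
          card_le_card_sdiff_add_card
      _ ≤ 1 + 2 * s := by
          refine add_le_add (hp.card_support_sdiff_matchedVerts_le_one hmax fun w hw => ?_)
            hp.card_matchedVerts.le
          exact (Nat.lt_succ_iff.1 hs).trans_lt (hdeg w hw)
      _ ≤ 2 * k + 1 := by omega
  exact card_edgeFinset_le_choose_card_support.trans (Nat.choose_le_choose 2 hsupp)

lemma degree_deleteIncidenceSet_add_one [Fintype V] [DecidableRel G.Adj] {u v : V}
    (huv : G.Adj u v) :
    (G.deleteIncidenceSet u).degree v + 1 = G.degree v := by
  have : (G.deleteIncidenceSet u).neighborFinset v = (G.neighborFinset v).erase u := by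
    ext x
    simp [deleteIncidenceSet_adj, huv.ne', and_comm]
  rw [← card_neighborFinset_eq_degree, ← card_neighborFinset_eq_degree, this,
    card_erase_add_one ((G.mem_neighborFinset _ _).2 huv.symm)]

lemma card_edgeFinset_add_one_le_of_adj [Fintype V] [DecidableRel G.Adj] {u v : V}
    (huv : G.Adj u v) :
    #G.edgeFinset + 1 ≤
      #((G.deleteIncidenceSet u).deleteIncidenceSet v).edgeFinset + G.degree u + G.degree v := by
  have := degree_deleteIncidenceSet_add_one huv
  rw [card_edgeFinset_deleteIncidenceSet, card_edgeFinset_deleteIncidenceSet]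
  omega

lemma support_deleteIncidenceSet_deleteIncidenceSet_subset {S : Finset V} (hS : G.support ⊆ S)
    (u v : V) :
    ((G.deleteIncidenceSet u).deleteIncidenceSet v).support ⊆ ↑((S.erase u).erase v) := by
  rintro x ⟨y, hxy⟩
  simp only [deleteIncidenceSet_adj] at hxy
  simpa [hxy.2.1, hxy.1.2.1] using hS ⟨y, hxy.1.1⟩

lemma not_hasMatching_deleteIncidenceSet {k : ℕ} {u v : V} (huv : G.Adj u v)
    (h : ¬HasMatching G (k + 1)) :
    ¬HasMatching ((G.deleteIncidenceSet u).deleteIncidenceSet v) k := by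
  rintro ⟨p, hp : IsMatchingFamily _ p⟩
  have hsupp := hp.matchedVerts_subset_support
  refine h ⟨_, (hp.mono ?_).snoc huv (fun hu => ?_) (fun hv => ?_)⟩
  · exact (deleteIncidenceSet_le _ v).trans (deleteIncidenceSet_le G u)
  · obtain ⟨y, hy⟩ := hsupp hu
    simp [deleteIncidenceSet_adj] at hy
  · obtain ⟨y, hy⟩ := hsupp hv
    simp [deleteIncidenceSet_adj] at hy

lemma degree_lt_card_of_support_subset [Fintype V] [DecidableRel G.Adj] {S : Finset V}
    (hS : G.support ⊆ S) {z : V} (hz : z ∈ G.support) : G.degree z < #S := by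
  rw [← card_neighborFinset_eq_degree]
  refine card_lt_card ((ssubset_iff_of_subset fun x hx => hS ?_).2 ⟨z, hS hz, by simp⟩)
  exact G.neighborSet_subset_support z ((G.mem_neighborFinset _ _).1 hx)

/-- Graphs supported on `S` stand for graphs on `#S` vertices, so that deleting two vertices keeps
the vertex type. Over `ℤ`, `k - 1 = -1` at `k = 0`, which lets the step to `k = 1` go through
uniformly. -/
theorem two_mul_card_edgeFinset_add_le [Fintype V] [DecidableRel G.Adj] {k : ℕ} {S : Finset V}
    (hS : G.support ⊆ S) (hk : ¬HasMatching G k) (hn : 5 * k ≤ 2 * #S + 2) :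
    2 * (#G.edgeFinset : ℤ) + k * (k - 1) ≤ 2 * (k - 1) * #S := by
  induction k generalizing G S with
  | zero => exact absurd (hasMatching_zero G) hk
  | succ k ih =>
    by_cases hA : ∃ u v, G.Adj u v ∧ G.degree u + G.degree v + 1 ≤ #S + k
    · obtain ⟨u, v, huv, hdeg⟩ := hA
      have hS' : #((S.erase u).erase v) + 2 = #S := by
        have hu : u ∈ S := hS ⟨v, huv⟩
        have hv : v ∈ S.erase u := mem_erase.2 ⟨huv.ne', hS ⟨u, huv.symm⟩⟩
        rw [← card_erase_add_one hu, ← card_erase_add_one hv]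
      have ih' := ih (support_deleteIncidenceSet_deleteIncidenceSet_subset hS u v)
        (not_hasMatching_deleteIncidenceSet huv hk) (by omega)
      have hedge := card_edgeFinset_add_one_le_of_adj huv
      zify at hdeg hedge hS'
      push_cast
      rw [← hS'] at hdeg ⊢
      linear_combination ih' + 2 * hedge + 2 * hdeg
    · push Not at hA
      have hdeg : ∀ w ∈ G.support, k < G.degree w := by
        rintro w ⟨z, hwz⟩
        have := hA w z hwz
        have := degree_lt_card_of_support_subset hS ⟨w, hwz.symm⟩
        omega
      have hedge := card_edgeFinset_le_of_not_hasMatching_of_lt_degree hk hdeg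
      rw [Nat.choose_two_right, Nat.add_sub_cancel] at hedge
      have h2e := (Nat.mul_le_mul_left 2 hedge).trans (Nat.mul_div_le _ 2)
      have hkS : k * (5 * k + 3) ≤ k * (2 * #S) := Nat.mul_le_mul_left k (by omega)
      zify at h2e hkS
      push_cast
      linarith

end SimpleGraph

theorem stmt8_general {n k : ℕ} (hn : 5 * k - 2 ≤ 2 * n) (G : SimpleGraph (Fin n))
    (hfree : ¬ HasMatching G k) :
    G.edgeSet.ncard ≤ (k - 1) * n - k * (k - 1) / 2 := by
  have key := SimpleGraph.two_mul_card_edgeFinset_add_le (G := G) (S := univ) (by simp) hfree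
    (by rw [card_univ, Fintype.card_fin]; omega)
  have hk : 1 ≤ k := Nat.one_le_iff_ne_zero.2 fun h => hfree (h ▸ G.hasMatching_zero)
  have key' : 2 * #G.edgeFinset + k * (k - 1) ≤ 2 * ((k - 1) * n) := by
    zify [hk]
    simpa [mul_assoc] using key
  have := Nat.two_mul_div_two_of_even (Nat.even_mul_pred_self k)
  rw [Set.ncard_eq_toFinset_card', Set.toFinset_card, ← SimpleGraph.edgeFinset_card]
  omega

/-- if `k ≥ 2`, `n ≥ (5k-2)/2` and `G` on `n` vertices has no `k` pairwise
disjoint edges, then `e(G) ≤ (k-1)n - k(k-1)/2`. -/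
theorem stmt8 {n k : ℕ} (hk : 2 ≤ k) (hn : 5 * k - 2 ≤ 2 * n) (G : SimpleGraph (Fin n))
    (hfree : ¬ HasMatching G k) :
    G.edgeSet.ncard ≤ (k - 1) * n - k * (k - 1) / 2 :=
  stmt8_general hn G hfree

end
end

section
/- Let k ≥ 2 and 2k - 1 ≤ n < (5k - 2)/2. If G is a graph on n vertices containing no k pairwise disjoint edges, then e(G) ≤ C(2k-1, 2), with equality if and only if G is isomorphic to K_{2k-1} ∪ (n - 2k + 1)K_1. -/
/-! A graph with no `K + 1` disjoint edges and `m` non-isolated vertices has at most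
`max (C(2K+1, 2)) (C(K, 2) + K (m - K))` edges (Erdős–Gallai), by induction on `K`. When
`m ≥ 2K + 2`, either some vertex `v` has degree `≥ 2K + 1`, and deleting the edges at `v` leaves
no `K` disjoint edges, since a `K`-matching misses some neighbour of `v`; or some non-isolated `x`
has degree `≤ K`, and deleting the edges at `x` and at a neighbour `y` (at most `3K` edges, as no
degree exceeds `2K`) again leaves no `K` disjoint edges. One of the two happens: if every
non-isolated vertex had degree `> K`, a `K`-matching could be augmented through two unmatched
vertices.

For `2n < 5k - 2` the clique term `C(2k-1, 2)` dominates, and both reductions land strictly below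
it. So at equality the edges span exactly `2k - 1` vertices, and then they form a clique.
-/

open Matrix

noncomputable section
open scoped Classical

section Matching

variable {V : Type*}

def IsMatchingFamily (G : SimpleGraph V) {t : ℕ} (p : Fin t → V × V) : Prop :=
  (∀ i, G.Adj (p i).1 (p i).2) ∧ ∀ i j, i ≠ j →
    (p i).1 ≠ (p j).1 ∧ (p i).1 ≠ (p j).2 ∧ (p i).2 ≠ (p j).1 ∧ (p i).2 ≠ (p j).2

lemma hasMatching_iff {G : SimpleGraph V} {t : ℕ} :
    HasMatching G t ↔ ∃ p : Fin t → V × V, IsMatchingFamily G p :=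
  Iff.rfl

lemma hasMatching_zero (G : SimpleGraph V) : HasMatching G 0 :=
  ⟨Fin.elim0, fun i => i.elim0, fun i => i.elim0⟩

lemma hasMatching_one_of_adj {G : SimpleGraph V} {a b : V} (h : G.Adj a b) : HasMatching G 1 :=
  ⟨fun _ => (a, b), fun _ => h, fun i j hij => absurd (Subsingleton.elim i j) hij⟩

def matchedVerts {t : ℕ} (p : Fin t → V × V) : Finset V :=
  Finset.univ.biUnion fun i => {(p i).1, (p i).2}

lemma mem_matchedVerts {t : ℕ} {p : Fin t → V × V} {v : V} :
    v ∈ matchedVerts p ↔ ∃ i, v = (p i).1 ∨ v = (p i).2 := by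
  simp [matchedVerts]

lemma card_matchedVerts_le {t : ℕ} (p : Fin t → V × V) : (matchedVerts p).card ≤ 2 * t :=
  Finset.card_biUnion_le.trans <| by
    simpa [mul_comm] using Finset.sum_le_card_nsmul Finset.univ
      (fun i => ({(p i).1, (p i).2} : Finset V).card) 2 fun i _ => Finset.card_le_two

lemma card_filter_pair_le (P : V → Prop) [DecidablePred P] (a b : V) :
    (({a, b} : Finset V).filter P).card ≤ (if P a then 1 else 0) + (if P b then 1 else 0) := by
  rw [Finset.filter_insert, Finset.filter_singleton]
  split_ifs <;> simp [Finset.card_le_two]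

namespace IsMatchingFamily

variable {G H : SimpleGraph V} {t : ℕ} {p : Fin t → V × V}

lemma hasMatching (hp : IsMatchingFamily G p) : HasMatching G t := ⟨p, hp⟩

lemma mono (hp : IsMatchingFamily G p) (hGH : G ≤ H) : IsMatchingFamily H p :=
  ⟨fun i => hGH (hp.1 i), hp.2⟩

lemma matchedVerts_subset_support (hp : IsMatchingFamily G p) :
    ↑(matchedVerts p) ⊆ G.support := by
  intro v hv
  obtain ⟨i, rfl | rfl⟩ := mem_matchedVerts.1 hv
  exacts [⟨_, hp.1 i⟩, ⟨_, (hp.1 i).symm⟩]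

lemma cons (hp : IsMatchingFamily G p) {a b : V} (hab : G.Adj a b)
    (ha : a ∉ matchedVerts p) (hb : b ∉ matchedVerts p) :
    IsMatchingFamily G (Fin.cons (a, b) p : Fin (t + 1) → V × V) := by
  simp only [mem_matchedVerts, not_exists, not_or] at ha hb
  refine ⟨Fin.cases hab hp.1, fun i j hij => ?_⟩
  cases i using Fin.cases <;> cases j using Fin.cases
  · exact absurd rfl hij
  · simp only [Fin.cons_zero, Fin.cons_succ]
    exact ⟨(ha _).1, (ha _).2, (hb _).1, (hb _).2⟩
  · simp only [Fin.cons_zero, Fin.cons_succ]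
    exact ⟨Ne.symm (ha _).1, Ne.symm (hb _).1, Ne.symm (ha _).2, Ne.symm (hb _).2⟩
  · simpa using hp.2 _ _ (fun h => hij (congrArg Fin.succ h))

lemma update (hp : IsMatchingFamily G p) (i : Fin t) {a b : V} (hab : G.Adj a b)
    (ha : ∀ j ≠ i, a ≠ (p j).1 ∧ a ≠ (p j).2)
    (hb : ∀ j ≠ i, b ≠ (p j).1 ∧ b ≠ (p j).2) :
    IsMatchingFamily G (Function.update p i (a, b)) := by
  refine ⟨fun j => ?_, fun j l hjl => ?_⟩
  · rcases eq_or_ne j i with rfl | hj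
    · simpa using hab
    · simpa [hj] using hp.1 j
  rcases eq_or_ne j i with rfl | hj
  · simp only [Function.update_self, Function.update_of_ne hjl.symm]
    exact ⟨(ha l hjl.symm).1, (ha l hjl.symm).2, (hb l hjl.symm).1, (hb l hjl.symm).2⟩
  rcases eq_or_ne l i with rfl | hl
  · simp only [Function.update_self, Function.update_of_ne hj]
    exact ⟨Ne.symm (ha j hj).1, Ne.symm (hb j hj).1, Ne.symm (ha j hj).2, Ne.symm (hb j hj).2⟩
  · simpa [hj, hl] using hp.2 j l hjl

-- The pair `((p i).1, (p i).2)` is replaced by the two pairs `(x, (p i).1)` and `(y, (p i).2)`.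
lemma hasMatching_succ_of_reroute (hp : IsMatchingFamily G p) (i : Fin t) {x y : V}
    (hx : x ∉ matchedVerts p) (hy : y ∉ matchedVerts p) (hxy : x ≠ y)
    (hxu : G.Adj x (p i).1) (hyv : G.Adj y (p i).2) : HasMatching G (t + 1) := by
  simp only [mem_matchedVerts, not_exists, not_or] at hx hy
  have hq := hp.update i hxu (fun j _ => hx j)
    fun j hj => ⟨(hp.2 i j hj.symm).1, (hp.2 i j hj.symm).2.1⟩
  refine (hq.cons hyv ?_ ?_).hasMatching <;> simp only [mem_matchedVerts, not_exists] <;>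
    intro j <;> rcases eq_or_ne j i with rfl | hj
  · simpa [hxy.symm] using (hy j).1
  · simpa [hj] using hy j
  · simpa using ⟨fun h => (hx j).2 h.symm, (hp.1 j).ne.symm⟩
  · simpa [hj] using ⟨(hp.2 i j hj.symm).2.2.1, (hp.2 i j hj.symm).2.2.2⟩

variable [Fintype V]

lemma degree_le_sum_of_neighborFinset_subset {z : V}
    (hz : G.neighborFinset z ⊆ matchedVerts p) :
    G.degree z ≤
      ∑ i, ((if G.Adj z (p i).1 then 1 else 0) + (if G.Adj z (p i).2 then 1 else 0)) := by
  have hN : G.neighborFinset z = (matchedVerts p).filter (G.Adj z) := by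
    ext w
    simpa using fun h => hz ((G.mem_neighborFinset z w).2 h)
  rw [← G.card_neighborFinset_eq_degree, hN, matchedVerts, Finset.filter_biUnion]
  exact Finset.card_biUnion_le.trans (Finset.sum_le_sum fun i _ => card_filter_pair_le _ _ _)

lemma hasMatching_succ (hp : IsMatchingFamily G p) (s : Finset V) (hs : 2 * t + 2 ≤ s.card)
    (hdeg : ∀ v ∈ s, t + 1 ≤ G.degree v) : HasMatching G (t + 1) := by
  by_contra hcon
  obtain ⟨x, hx, y, hy, hxy⟩ := Finset.one_lt_card.1 <| show 1 < (s \ matchedVerts p).card by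
    have := Finset.le_card_sdiff (matchedVerts p) s
    have := card_matchedVerts_le p
    omega
  rw [Finset.mem_sdiff] at hx hy
  have hN : ∀ z ∉ matchedVerts p, G.neighborFinset z ⊆ matchedVerts p := fun z hz w hw =>
    by_contra fun hw' => hcon (hp.cons ((G.mem_neighborFinset z w).1 hw) hz hw').hasMatching
  -- `x` and `y` send more than `2t` edges into the `t` pairs, so some pair receives three of
  -- them, and two of those three are disjoint.
  obtain ⟨i, -, hi⟩ := Finset.exists_lt_of_sum_lt (s := Finset.univ) (f := fun _ => 2)
    (g := fun i => ((if G.Adj x (p i).1 then 1 else 0) + (if G.Adj x (p i).2 then 1 else 0)) +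
      ((if G.Adj y (p i).1 then 1 else 0) + (if G.Adj y (p i).2 then 1 else 0))) <| by
    have := degree_le_sum_of_neighborFinset_subset (hN x hx.2)
    have := degree_le_sum_of_neighborFinset_subset (hN y hy.2)
    have := hdeg x hx.1
    have := hdeg y hy.1
    simp only [Finset.sum_add_distrib, Finset.sum_const, Finset.card_univ, Fintype.card_fin,
      smul_eq_mul] at *
    omega
  split_ifs at hi <;> first
    | omega
    | exact hcon (hp.hasMatching_succ_of_reroute i hx.2 hy.2 hxy ‹_› ‹_›)
    | exact hcon (hp.hasMatching_succ_of_reroute i hy.2 hx.2 hxy.symm ‹_› ‹_›)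

end IsMatchingFamily

theorem hasMatching_of_le_degree [Fintype V] {G : SimpleGraph V} {k : ℕ} (s : Finset V)
    (hs : 2 * k ≤ s.card) (hdeg : ∀ v ∈ s, k ≤ G.degree v) : HasMatching G k := by
  induction k with
  | zero => exact hasMatching_zero G
  | succ t ih =>
    obtain ⟨p, hp⟩ := hasMatching_iff.1 (ih (by omega) fun v hv => (hdeg v hv).trans' t.le_succ)
    exact hp.hasMatching_succ s hs hdeg

end Matching

-- The edge counts of `K_{2K+1}` and of `K_K ∇ (m - K)K_1`, the two extremal graphs with `m`
-- non-isolated vertices and no `K + 1` disjoint edges.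
def cliqueEdgeBound (K : ℕ) : ℕ := (2 * K + 1).choose 2

def splitEdgeBound (K m : ℕ) : ℕ := K.choose 2 + K * (m - K)

def erdosGallaiBound (K m : ℕ) : ℕ := max (cliqueEdgeBound K) (splitEdgeBound K m)

lemma cliqueEdgeBound_succ (K : ℕ) :
    cliqueEdgeBound (K + 1) = cliqueEdgeBound K + (4 * K + 3) := by
  qify [cliqueEdgeBound, Nat.cast_choose_two]
  ring

lemma splitEdgeBound_pred_add {K m : ℕ} (h : K + 1 ≤ m) :
    splitEdgeBound K (m - 1) + (m - 1) = splitEdgeBound (K + 1) m := by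
  qify [splitEdgeBound, Nat.cast_choose_two, h, show K ≤ m - 1 by omega, show 1 ≤ m by omega]
  ring

lemma splitEdgeBound_sub_two_add_le {K m : ℕ} (h : 2 * K + 4 ≤ m) :
    splitEdgeBound K (m - 2) + 3 * (K + 1) ≤ splitEdgeBound (K + 1) m := by
  qify [splitEdgeBound, Nat.cast_choose_two, show K + 1 ≤ m by omega, show K ≤ m - 2 by omega,
    show 2 ≤ m by omega]
  have : (2 * K + 4 : ℚ) ≤ m := by exact_mod_cast h
  linarith

lemma two_mul_splitEdgeBound_add {K m : ℕ} (h : K ≤ m) :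
    2 * splitEdgeBound K m + K * (5 * K + 3) = 2 * cliqueEdgeBound K + K * (2 * m) := by
  qify [splitEdgeBound, cliqueEdgeBound, Nat.cast_choose_two, h]
  ring

lemma splitEdgeBound_succ_lt {K m : ℕ} (h : K + 1 ≤ m) (hm : 2 * m < 5 * K + 8) :
    splitEdgeBound (K + 1) m < cliqueEdgeBound (K + 1) := by
  have := two_mul_splitEdgeBound_add h
  have := Nat.mul_lt_mul_of_pos_left (show 2 * m < 5 * (K + 1) + 3 by omega)
    (show 0 < K + 1 by omega)
  omega

lemma cliqueEdgeBound_le_splitEdgeBound {K m : ℕ} (h : 5 * K + 3 ≤ 2 * m) :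
    cliqueEdgeBound K ≤ splitEdgeBound K m := by
  have := two_mul_splitEdgeBound_add (show K ≤ m by omega)
  have := Nat.mul_le_mul_left K h
  omega

lemma erdosGallaiBound_mono (K : ℕ) : Monotone (erdosGallaiBound K) := fun _ _ h =>
  max_le_max le_rfl (by unfold splitEdgeBound; gcongr)

lemma erdosGallaiBound_pred_add_le {K m : ℕ} (h : 2 * K + 4 ≤ m) :
    erdosGallaiBound K (m - 1) + (m - 1) ≤ erdosGallaiBound (K + 1) m := by
  simp only [erdosGallaiBound]
  rw [← max_add_add_right, splitEdgeBound_pred_add (by omega)]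
  refine max_le ?_ (le_max_right _ _)
  rcases le_or_gt m (4 * K + 4) with hm | hm
  · exact le_max_of_le_left (by rw [cliqueEdgeBound_succ]; omega)
  · rw [← splitEdgeBound_pred_add (by omega)]
    exact le_max_of_le_right
      (Nat.add_le_add_right (cliqueEdgeBound_le_splitEdgeBound (by omega)) _)

lemma erdosGallaiBound_sub_two_add_le {K m : ℕ} (h : 2 * K + 4 ≤ m) :
    erdosGallaiBound K (m - 2) + 3 * (K + 1) ≤ erdosGallaiBound (K + 1) m := by
  rw [erdosGallaiBound, ← max_add_add_right]
  exact max_le_max (by rw [cliqueEdgeBound_succ]; omega) (splitEdgeBound_sub_two_add_le h)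

lemma erdosGallaiBound_pred_add_lt {K m : ℕ} (h : 2 * K + 4 ≤ m) (hm : 2 * m < 5 * K + 8) :
    erdosGallaiBound K (m - 1) + (m - 1) < cliqueEdgeBound (K + 1) := by
  rw [erdosGallaiBound, ← max_add_add_right, splitEdgeBound_pred_add (by omega), max_lt_iff]
  exact ⟨by rw [cliqueEdgeBound_succ]; omega, splitEdgeBound_succ_lt (by omega) hm⟩

lemma erdosGallaiBound_sub_two_add_lt {K m : ℕ} (h : 2 * K + 4 ≤ m) (hm : 2 * m < 5 * K + 8) :
    erdosGallaiBound K (m - 2) + 3 * (K + 1) < cliqueEdgeBound (K + 1) := by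
  rw [erdosGallaiBound, ← max_add_add_right, max_lt_iff]
  exact ⟨by rw [cliqueEdgeBound_succ]; omega,
    (splitEdgeBound_sub_two_add_le h).trans_lt (splitEdgeBound_succ_lt (by omega) hm)⟩

namespace SimpleGraph

variable {V : Type*}

lemma card_edgeFinset_eq_ncard (G : SimpleGraph V) [Fintype G.edgeSet] :
    G.edgeFinset.card = G.edgeSet.ncard :=
  (Set.ncard_eq_toFinset_card' _).symm

lemma Iso.ncard_edgeSet_eq {W : Type*} {G : SimpleGraph V} {G' : SimpleGraph W}
    (φ : G ≃g G') : G.edgeSet.ncard = G'.edgeSet.ncard := by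
  rw [← Nat.card_coe_set_eq, ← Nat.card_coe_set_eq]
  exact Nat.card_congr φ.mapEdgeSet

lemma support_deleteIncidenceSet_deleteIncidenceSet_subset_s9 (G : SimpleGraph V) (x y : V) :
    ((G.deleteIncidenceSet x).deleteIncidenceSet y).support ⊆ G.support \ {x, y} := fun v hv => by
  obtain ⟨⟨hvG, hvx⟩, hvy⟩ :=
    Set.sdiff_subset_sdiff_left (G.support_deleteIncidenceSet_subset x)
      (support_deleteIncidenceSet_subset _ y hv)
  simp_all

lemma not_hasMatching_deleteIncidenceSet_deleteIncidenceSet {G : SimpleGraph V} {K : ℕ}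
    (hG : ¬ HasMatching G (K + 1)) {x y : V} (hxy : G.Adj x y) :
    ¬ HasMatching ((G.deleteIncidenceSet x).deleteIncidenceSet y) K := by
  intro h
  obtain ⟨q, hq⟩ := hasMatching_iff.1 h
  have hsupp := hq.matchedVerts_subset_support.trans
    (G.support_deleteIncidenceSet_deleteIncidenceSet_subset_s9 x y)
  have hx : x ∉ matchedVerts q := fun h => (hsupp h).2 (by simp)
  have hy : y ∉ matchedVerts q := fun h => (hsupp h).2 (by simp)
  exact hG ((hq.mono ((deleteIncidenceSet_le _ y).trans (G.deleteIncidenceSet_le x))).cons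
    hxy hx hy).hasMatching

variable [Fintype V] {G : SimpleGraph V} {K : ℕ}

lemma ncard_edgeSet_le_choose_ncard_support : G.edgeSet.ncard ≤ G.support.ncard.choose 2 := by
  rw [← card_edgeFinset_eq_ncard, ← G.card_edgeFinset_induce_support, ← Nat.card_coe_set_eq,
    Nat.card_eq_fintype_card]
  exact card_edgeFinset_le_card_choose_two

lemma adj_iff_of_ncard_edgeSet_eq (h : G.edgeSet.ncard = G.support.ncard.choose 2) (a b : V) :
    G.Adj a b ↔ a ≠ b ∧ a ∈ G.support ∧ b ∈ G.support := by
  have htop : G.induce G.support = ⊤ := by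
    rw [← edgeFinset_inj]
    refine Finset.eq_of_subset_of_card_le (edgeFinset_mono le_top) ?_
    rw [card_edgeFinset_top_eq_card_choose_two, card_edgeFinset_induce_support,
      card_edgeFinset_eq_ncard, h, ← Nat.card_coe_set_eq, Nat.card_eq_fintype_card]
  refine ⟨fun hab => ⟨hab.ne, ⟨b, hab⟩, ⟨a, hab.symm⟩⟩, fun ⟨hne, ha, hb⟩ => ?_⟩
  have : (G.induce G.support).Adj ⟨a, ha⟩ ⟨b, hb⟩ := by simpa [htop] using hne
  simpa using this

lemma ncard_edgeSet_of_adj_iff {s : Set V}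
    (hG : ∀ a b, G.Adj a b ↔ a ≠ b ∧ a ∈ s ∧ b ∈ s) :
    G.edgeSet.ncard = s.ncard.choose 2 := by
  have htop : G.induce s = ⊤ := by
    ext a b
    simp [hG, Subtype.ext_iff]
  rw [← card_edgeFinset_eq_ncard, ← card_edgeFinset_induce_of_support_subset
    (fun a ⟨b, hab⟩ => ((hG a b).1 hab).2.1), card_edgeFinset_eq_ncard, htop,
    ← card_edgeFinset_eq_ncard, card_edgeFinset_top_eq_card_choose_two,
    ← Nat.card_eq_fintype_card, Nat.card_coe_set_eq]

lemma degree_lt_ncard_support {v : V} (hv : v ∈ G.support) : G.degree v < G.support.ncard := by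
  rw [← G.degree_induce_support ⟨v, hv⟩, ← Nat.card_coe_set_eq, Nat.card_eq_fintype_card]
  exact degree_lt_card_verts _

lemma ncard_edgeSet_le_deleteIncidenceSet_add {H : SimpleGraph V} (hHG : H ≤ G) (v : V) :
    H.edgeSet.ncard ≤ (H.deleteIncidenceSet v).edgeSet.ncard + G.degree v := by
  have h₁ := H.card_edgeFinset_deleteIncidenceSet v
  have h₂ := degree_le_of_le (v := v) hHG
  rw [card_edgeFinset_eq_ncard, card_edgeFinset_eq_ncard] at h₁
  omega

lemma ncard_edgeSet_le_deleteIncidenceSet_deleteIncidenceSet (x y : V) :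
    G.edgeSet.ncard ≤
      ((G.deleteIncidenceSet x).deleteIncidenceSet y).edgeSet.ncard + G.degree x + G.degree y := by
  have h₁ := ncard_edgeSet_le_deleteIncidenceSet_add (le_refl G) x
  have h₂ := ncard_edgeSet_le_deleteIncidenceSet_add (G.deleteIncidenceSet_le x) y
  omega

lemma exists_mem_support_degree_le (hG : ¬ HasMatching G (K + 1))
    (hm : 2 * K + 2 ≤ G.support.ncard) : ∃ x ∈ G.support, G.degree x ≤ K := by
  by_contra! h
  refine hG (hasMatching_of_le_degree G.support.toFinset ?_ fun v hv => h v (by simpa using hv))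
  rwa [← Set.ncard_eq_toFinset_card']

lemma not_hasMatching_deleteIncidenceSet_s9 (hG : ¬ HasMatching G (K + 1)) {v : V}
    (hv : 2 * K + 1 ≤ G.degree v) : ¬ HasMatching (G.deleteIncidenceSet v) K := by
  intro h
  obtain ⟨q, hq⟩ := hasMatching_iff.1 h
  obtain ⟨w, hw, hwq⟩ := Finset.exists_mem_notMem_of_card_lt_card <|
    (card_matchedVerts_le q).trans_lt (hv.trans_eq (G.card_neighborFinset_eq_degree v).symm)
  have hvq : v ∉ matchedVerts q := fun h =>
    (G.support_deleteIncidenceSet_subset v (hq.matchedVerts_subset_support h)).2 rfl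
  exact hG ((hq.mono (G.deleteIncidenceSet_le v)).cons ((G.mem_neighborFinset v w).1 hw)
    hvq hwq).hasMatching

theorem ncard_edgeSet_le_max_of_not_hasMatching (hG : ¬ HasMatching G (K + 2))
    (hm : 2 * K + 4 ≤ G.support.ncard)
    (hbound : ∀ H : SimpleGraph V, ¬ HasMatching H (K + 1) →
      H.edgeSet.ncard ≤ erdosGallaiBound K H.support.ncard) :
    G.edgeSet.ncard ≤ max (erdosGallaiBound K (G.support.ncard - 1) + (G.support.ncard - 1))
      (erdosGallaiBound K (G.support.ncard - 2) + 3 * (K + 1)) := by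
  by_cases hbig : ∃ v, 2 * K + 3 ≤ G.degree v
  · obtain ⟨v, hv⟩ := hbig
    have hvG : v ∈ G.support := (G.degree_pos_iff_mem_support v).1 (by omega)
    have hsupp : (G.deleteIncidenceSet v).support.ncard ≤ G.support.ncard - 1 := by
      rw [← Set.ncard_sdiff_singleton_of_mem hvG]
      exact Set.ncard_le_ncard (G.support_deleteIncidenceSet_subset v)
    have hH := (hbound _ (not_hasMatching_deleteIncidenceSet_s9 hG (v := v) (by omega))).trans
      (erdosGallaiBound_mono K hsupp)
    have := ncard_edgeSet_le_deleteIncidenceSet_add (le_refl G) v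
    have := degree_lt_ncard_support hvG
    exact le_max_of_le_left (by omega)
  · push Not at hbig
    obtain ⟨x, hxG, hx⟩ := exists_mem_support_degree_le hG (by omega)
    obtain ⟨y, hxy⟩ := G.mem_support.1 hxG
    have hsupp : ((G.deleteIncidenceSet x).deleteIncidenceSet y).support.ncard ≤
        G.support.ncard - 2 := by
      rw [← Set.ncard_pair hxy.ne, ← Set.ncard_sdiff
        (Set.insert_subset_iff.2 ⟨hxG, Set.singleton_subset_iff.2 ⟨x, hxy.symm⟩⟩)]
      exact Set.ncard_le_ncard (G.support_deleteIncidenceSet_deleteIncidenceSet_subset_s9 x y)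
    have hH := (hbound _ (not_hasMatching_deleteIncidenceSet_deleteIncidenceSet hG hxy)).trans
      (erdosGallaiBound_mono K hsupp)
    have := G.ncard_edgeSet_le_deleteIncidenceSet_deleteIncidenceSet x y
    have := hbig y
    exact le_max_of_le_right (by omega)

theorem ncard_edgeSet_le_erdosGallaiBound (K : ℕ) (G : SimpleGraph V)
    (hG : ¬ HasMatching G (K + 1)) : G.edgeSet.ncard ≤ erdosGallaiBound K G.support.ncard := by
  induction K generalizing G with
  | zero =>
    have : G = ⊥ := by
      ext a b
      exact iff_of_false (fun h => hG (hasMatching_one_of_adj h)) id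
    simp [this]
  | succ K ih =>
    rcases le_or_gt G.support.ncard (2 * K + 3) with hm | hm
    · calc G.edgeSet.ncard ≤ G.support.ncard.choose 2 := ncard_edgeSet_le_choose_ncard_support
        _ ≤ cliqueEdgeBound (K + 1) := Nat.choose_le_choose 2 hm
        _ ≤ _ := le_max_left _ _
    · exact (ncard_edgeSet_le_max_of_not_hasMatching hG hm ih).trans
        (max_le (erdosGallaiBound_pred_add_le hm) (erdosGallaiBound_sub_two_add_le hm))

lemma ncard_support_eq_of_ncard_edgeSet_eq (hG : ¬ HasMatching G (K + 2))
    (hm : 2 * G.support.ncard < 5 * K + 8)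
    (he : G.edgeSet.ncard = cliqueEdgeBound (K + 1)) : G.support.ncard = 2 * K + 3 := by
  by_contra hne
  rcases lt_or_gt_of_ne hne with hlt | hgt
  · have h₁ := ncard_edgeSet_le_choose_ncard_support.trans
      (Nat.choose_le_choose 2 (show G.support.ncard ≤ 2 * K + 2 by omega))
    have h₂ : cliqueEdgeBound (K + 1) = (2 * K + 2).choose 2 + (2 * K + 2) := by
      rw [cliqueEdgeBound, show 2 * (K + 1) + 1 = 2 * K + 2 + 1 by ring, Nat.choose_succ_succ',
        Nat.choose_one_right, add_comm]
    omega
  · have := (ncard_edgeSet_le_max_of_not_hasMatching hG hgt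
      (ncard_edgeSet_le_erdosGallaiBound K)).trans_lt
      (max_lt (erdosGallaiBound_pred_add_lt hgt hm) (erdosGallaiBound_sub_two_add_lt hgt hm))
    omega

end SimpleGraph

lemma nonempty_iso_cliqueUnion {n m : ℕ} {G : SimpleGraph (Fin n)} {s : Set (Fin n)}
    (hs : s.ncard = m) (hG : ∀ a b, G.Adj a b ↔ a ≠ b ∧ a ∈ s ∧ b ∈ s) :
    Nonempty (G ≃g cliqueUnion n m) := by
  have hmn : m ≤ n := hs ▸ (Set.ncard_le_card s).trans_eq (Nat.card_fin n)
  let e : s ≃ {i : Fin n // (i : ℕ) < m} := Fintype.equivOfCardEq <| by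
    rw [Fintype.card_fin_lt_of_le hmn, ← Nat.card_eq_fintype_card, Nat.card_coe_set_eq, hs]
  have he : ∀ a, (e.extendSubtype a : ℕ) < m ↔ a ∈ s := fun a =>
    ⟨fun h => by_contra fun ha => e.extendSubtype_not_mem a ha h, e.extendSubtype_mem a⟩
  exact ⟨⟨e.extendSubtype, by simp [cliqueUnion, hG, he]⟩⟩

lemma ncard_edgeSet_cliqueUnion {n m : ℕ} (h : m ≤ n) :
    (cliqueUnion n m).edgeSet.ncard = m.choose 2 := by
  rw [SimpleGraph.ncard_edgeSet_of_adj_iff (s := {i : Fin n | (i : ℕ) < m}) fun _ _ => Iff.rfl,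
    ← Nat.card_coe_set_eq]
  exact congrArg (Nat.choose · 2) (Nat.card_eq_fintype_card.trans (Fintype.card_fin_lt_of_le h))

/-- if `k ≥ 2`, `2k - 1 ≤ n < (5k-2)/2` and `G` on `n` vertices has no `k`
pairwise disjoint edges, then `e(G) ≤ C(2k-1,2)`, with equality iff
`G ≅ K_{2k-1} ∪ (n-2k+1)K_1`. -/
theorem stmt9 {n k : ℕ} (hk : 2 ≤ k) (hn1 : 2 * k - 1 ≤ n) (hn2 : 2 * n < 5 * k - 2)
    (G : SimpleGraph (Fin n)) (hfree : ¬ HasMatching G k) :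
    G.edgeSet.ncard ≤ Nat.choose (2 * k - 1) 2 ∧
    (G.edgeSet.ncard = Nat.choose (2 * k - 1) 2 ↔
      Nonempty (G ≃g cliqueUnion n (2 * k - 1))) := by
  obtain ⟨K, rfl⟩ := Nat.exists_eq_add_of_le' hk
  rw [show 2 * (K + 2) - 1 = 2 * (K + 1) + 1 by omega]
  have hmn : G.support.ncard ≤ n := (Set.ncard_le_card _).trans_eq (Nat.card_fin n)
  have hbound : G.edgeSet.ncard ≤ cliqueEdgeBound (K + 1) :=
    (SimpleGraph.ncard_edgeSet_le_erdosGallaiBound (K + 1) G hfree).trans <|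
      (erdosGallaiBound_mono (K + 1) hmn).trans_eq
        (max_eq_left (splitEdgeBound_succ_lt (by omega) (by omega)).le)
  refine ⟨hbound, fun he => ?_, fun ⟨φ⟩ => ?_⟩
  · have hm := SimpleGraph.ncard_support_eq_of_ncard_edgeSet_eq hfree (by omega) he
    exact nonempty_iso_cliqueUnion hm
      (SimpleGraph.adj_iff_of_ncard_edgeSet_eq (by rw [he, hm]; rfl))
  · rw [φ.ncard_edgeSet_eq, ncard_edgeSet_cliqueUnion (by omega)]

end
end

section
/- The complete split graph S_{n,k} contains no copy of the k-fan F_k = K_1 ∇ kK_2 (k triangles sharing exactly one common vertex) as a subgraph, for all n > k ≥ 1. -/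
open Matrix

noncomputable section
open scoped Classical

/-! The vertices of `S_{n,k}` outside its `k`-clique are independent, so a copy of `F_k` puts an
independent set of `F_k` there. An independent set of `F_k` is either the center alone or takes
at most one endpoint of each of the `k` matching edges, so at least `k + 1` vertices of `F_k` are
mapped injectively into the `k`-clique. -/

namespace ContainsSub

variable {V W : Type*} {G : SimpleGraph V} {H : SimpleGraph W}

theorem card_le_add [Fintype W] (h : ContainsSub G H) (c : Finset V)
    (hc : G.IsIndepSet (↑c)ᶜ) {a : ℕ} (ha : ∀ t : Finset W, H.IsIndepSet t → t.card ≤ a) :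
    Fintype.card W ≤ c.card + a := by
  obtain ⟨f, hf, hadj⟩ := h
  have hin : (Finset.univ.filter fun w => f w ∈ c).card ≤ c.card :=
    Finset.card_le_card_of_injOn f (fun w hw => (Finset.mem_filter.1 hw).2) hf.injOn
  have hout : H.IsIndepSet ↑(Finset.univ.filter fun w => f w ∉ c) := by
    intro v hv w hw hvw hvw'
    simp only [Finset.mem_coe, Finset.mem_filter, Finset.mem_univ, true_and] at hv hw
    exact hc hv hw (hf.ne hvw) (hadj v w hvw')
  calc Fintype.card W
      = (Finset.univ.filter fun w => f w ∈ c).card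
        + (Finset.univ.filter fun w => f w ∉ c).card :=
        (Finset.card_filter_add_card_filter_not _).symm
    _ ≤ c.card + a := Nat.add_le_add hin (ha _ hout)

end ContainsSub

theorem splitGraph_isIndepSet_compl (n k : ℕ) :
    (splitGraph n k).IsIndepSet (↑(Finset.univ.filter fun i : Fin n => i.val < k))ᶜ := by
  intro i hi j hj _ ⟨_, hij⟩
  simp only [Set.mem_compl_iff, Finset.mem_coe, Finset.mem_filter, Finset.mem_univ, true_and,
    not_lt] at hi hj
  omega

theorem fan_adj_zero {k : ℕ} {v : Fin (2 * k + 1)} (hv : v ≠ 0) : (fan k).Adj 0 v :=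
  ⟨hv.symm, Or.inl rfl⟩

theorem fan_isIndepSet_card_le {k : ℕ} (hk : 1 ≤ k) (t : Finset (Fin (2 * k + 1)))
    (ht : (fan k).IsIndepSet t) : t.card ≤ k := by
  by_cases h0 : (0 : Fin (2 * k + 1)) ∈ t
  · have hsub : t ⊆ {0} := fun v hv => by
      by_contra hv0
      exact ht h0 hv (Ne.symm (by simpa using hv0)) (fan_adj_zero (by simpa using hv0))
    exact (Finset.card_le_card hsub).trans (by simpa using hk)
  · -- away from the center, `(v - 1) / 2` is the index of the triangle containing `v`
    calc t.card ≤ (Finset.range k).card := by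
          refine Finset.card_le_card_of_injOn (fun v => (v.val - 1) / 2) (fun v hv => ?_) ?_
          · have hv0 : v ≠ 0 := fun h => h0 (h ▸ hv)
            have := Fin.pos_iff_ne_zero.2 hv0
            simp only [Finset.coe_range, Set.mem_Iio]
            omega
          · intro v hv w hw hvw
            by_contra hne
            exact ht hv hw hne ⟨hne, Or.inr (Or.inr hvw)⟩
      _ = k := Finset.card_range k

theorem stmt10_general (n k : ℕ) (hk : 1 ≤ k) :
    FanFree (splitGraph n k) k := by
  intro h
  have hclique : (Finset.univ.filter fun i : Fin n => i.val < k).card ≤ k := by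
    rw [Fin.card_filter_val_lt]
    exact min_le_right n k
  have := h.card_le_add _ (splitGraph_isIndepSet_compl n k) (fan_isIndepSet_card_le hk)
  rw [Fintype.card_fin] at this
  omega

/-- for `n > k ≥ 1`, the complete split graph `S_{n,k}` contains no copy of
the `k`-fan `F_k` as a subgraph. -/
theorem stmt10 (n k : ℕ) (hk : 1 ≤ k) (hn : k < n) :
    FanFree (splitGraph n k) k :=
  stmt10_general n k hk

end
end

section
/- Let G be a graph, v a vertex of G, and suppose there are at least k vertices outside N(v) ∪ {v} or equal to v, each adjacent to every vertex of N(v). If G is F_k-free, then every vertex of N(v) has degree at most k - 1 in the induced subgraph G[N(v)]. -/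
open Matrix

noncomputable section
open scoped Classical

/-! If `u ∈ N(v)` had `k` neighbours `x_1, …, x_k` inside `N(v)`, then the edges
`x_i w_i` are pairwise disjoint (the `x_i` lie in `N(v)`, the `w_i` do not) and all of their ends
are adjacent to `u`, so together with the centre `u` they form a copy of `F_k`. -/

open Function

theorem Set.exists_injective_fin_of_le_ncard {α : Type*} {s : Set α} {n : ℕ} (h : n ≤ s.ncard) :
    ∃ f : Fin n → α, Injective f ∧ ∀ i, f i ∈ s := by
  obtain ⟨e⟩ : Nonempty (Fin n ↪ s) := by
    rcases s.finite_or_infinite with hs | hs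
    · have := hs.fintype
      apply Embedding.nonempty_of_card_le
      rwa [Fintype.card_fin, ← Nat.card_eq_fintype_card, Nat.card_coe_set_eq]
    · exact ⟨Fin.valEmbedding.trans hs.to_subtype.natEmbedding⟩
  exact ⟨fun i => e i, Subtype.val_injective.comp e.injective, fun i => (e i).2⟩

/-- `2m ↦ inl m` and `2m + 1 ↦ inr m`; composed with `Fin.succ`, the leaves `2m + 1, 2m + 2` of
`fan k` become the two ends `inl m, inr m` of the `m`-th matching edge. -/
def fanLeaf {k : ℕ} (i : Fin (2 * k)) : Fin k ⊕ Fin k :=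
  if i.val % 2 = 0 then .inl ⟨i / 2, by omega⟩ else .inr ⟨i / 2, by omega⟩

theorem fanLeaf_injective {k : ℕ} : Injective (fanLeaf (k := k)) := by
  intro i j h
  unfold fanLeaf at h
  split_ifs at h <;> simp only [Sum.inl.injEq, Sum.inr.injEq, Fin.mk.injEq] at h <;> omega

theorem fanLeaf_eq_swap {k : ℕ} {i j : Fin (2 * k)} (hij : i ≠ j) (h : i.val / 2 = j.val / 2) :
    fanLeaf j = (fanLeaf i).swap := by
  have hval : i.val ≠ j.val := Fin.val_ne_of_ne hij
  unfold fanLeaf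
  split_ifs <;> simp only [Sum.swap_inl, Sum.swap_inr, Sum.inl.injEq, Sum.inr.injEq, reduceCtorEq,
    Fin.mk.injEq] <;> omega

theorem containsSub_fan_of_matching {V : Type*} {G : SimpleGraph V} {k : ℕ} {c : V}
    {a b : Fin k → V} (hab : Injective (Sum.elim a b)) (hca : ∀ m, G.Adj c (a m))
    (hcb : ∀ m, G.Adj c (b m)) (hmatch : ∀ m, G.Adj (a m) (b m)) :
    ContainsSub G (fan k) := by
  set p := Sum.elim a b
  have hcp : ∀ l, G.Adj c (p l) := Sum.rec hca hcb
  have hswap : ∀ l, G.Adj (p l) (p l.swap) := Sum.rec hmatch fun m => (hmatch m).symm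
  refine ⟨Fin.cons c (p ∘ fanLeaf),
    Fin.cons_injective_iff.2 ⟨fun ⟨i, hi⟩ => (hcp _).ne hi.symm, hab.comp fanLeaf_injective⟩, ?_⟩
  rintro i j ⟨hne, hfan⟩
  cases i using Fin.cases <;> cases j using Fin.cases
  · exact absurd rfl hne
  · exact hcp _
  · exact (hcp _).symm
  case succ.succ i j =>
    have hij : i ≠ j := fun h => hne (congrArg Fin.succ h)
    have hblock : i.val / 2 = j.val / 2 := by simpa [Fin.succ_ne_zero] using hfan
    simpa only [Fin.cons_succ, Function.comp_apply, fanLeaf_eq_swap hij hblock]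
      using hswap (fanLeaf i)

/-- if there are `k` distinct vertices outside `N(v)` each adjacent to every
vertex of `N(v)`, and `G` is `F_k`-free, then every vertex of `N(v)` has degree at most
`k - 1` in `G[N(v)]`. -/
theorem stmt16 {V : Type*} (G : SimpleGraph V) (v : V) (k : ℕ)
    (w : Fin k → V) (hinj : Function.Injective w)
    (hout : ∀ i, w i ∉ G.neighborSet v)
    (hdom : ∀ i, ∀ u ∈ G.neighborSet v, G.Adj (w i) u)
    (hfree : FanFree G k) :
    ∀ u ∈ G.neighborSet v,
      {x | x ∈ G.neighborSet v ∧ G.Adj u x}.ncard ≤ k - 1 := by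
  intro u hu
  by_contra! hcard
  obtain ⟨x, hx_inj, hx⟩ := Set.exists_injective_fin_of_le_ncard
    (s := {x | x ∈ G.neighborSet v ∧ G.Adj u x}) (n := k) (by omega)
  have hxw : ∀ i j, x i ≠ w j := fun i j h => hout j (h ▸ (hx i).1)
  exact hfree <| containsSub_fan_of_matching (hx_inj.sumElim hinj hxw) (fun m => (hx m).2)
    (fun m => (hdom m u hu).symm) (fun m => (hdom m _ (hx m).1).symm)

end
end

section
/- Let G be a kK_2-free graph (k ≥ 2) with a matching {r_1 s_1, ..., r_{k-1} s_{k-1}}, R = {r_i}, S = {s_i}, T = V(G) \ (R ∪ S). Then for each i, either N(r_i) ∩ T = ∅, or N(s_i) ∩ T = ∅, or N(r_i) ∩ T = N(s_i) ∩ T = {t_i} for a single vertex t_i ∈ T. -/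
open Matrix

noncomputable section
open scoped Classical

/-!
Replacing the matching edge `r_i s_i` by two edges `r_i u`, `s_i v` with distinct `u, v ∈ T`
yields `k` disjoint edges. So in a `kK₂`-free graph every `T`-neighbour of `r_i` coincides with
every `T`-neighbour of `s_i`, which leaves exactly the three cases of the statement.
-/

section Matching

variable {V ι : Type*} {G : SimpleGraph V}

def EdgesDisjoint (e f : V × V) : Prop :=
  e.1 ≠ f.1 ∧ e.1 ≠ f.2 ∧ e.2 ≠ f.1 ∧ e.2 ≠ f.2

theorem EdgesDisjoint.symm {e f : V × V} (h : EdgesDisjoint e f) : EdgesDisjoint f e :=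
  ⟨h.1.symm, h.2.2.1.symm, h.2.1.symm, h.2.2.2.symm⟩

def IsEdgeMatching (G : SimpleGraph V) (p : ι → V × V) : Prop :=
  (∀ i, G.Adj (p i).1 (p i).2) ∧ Pairwise fun i j => EdgesDisjoint (p i) (p j)

theorem IsEdgeMatching.update [DecidableEq ι] {p : ι → V × V} (hp : IsEdgeMatching G p)
    (i : ι) {e : V × V} (he : G.Adj e.1 e.2) (hfresh : ∀ j, j ≠ i → EdgesDisjoint e (p j)) :
    IsEdgeMatching G (Function.update p i e) := by
  refine ⟨fun j => ?_, fun a b hab => ?_⟩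
  · rcases eq_or_ne j i with rfl | hj
    · simpa only [Function.update_self] using he
    · simpa only [Function.update_of_ne hj] using hp.1 j
  · rcases eq_or_ne a i with rfl | ha
    · simpa only [Function.update_self, Function.update_of_ne hab.symm] using hfresh b hab.symm
    rcases eq_or_ne b i with rfl | hb
    · simpa only [Function.update_self, Function.update_of_ne ha] using (hfresh a ha).symm
    · simpa only [Function.update_of_ne ha, Function.update_of_ne hb] using hp.2 hab

theorem IsEdgeMatching.snoc {n : ℕ} {p : Fin n → V × V} (hp : IsEdgeMatching G p)
    {e : V × V} (he : G.Adj e.1 e.2) (hfresh : ∀ j, EdgesDisjoint (p j) e) :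
    IsEdgeMatching G (Fin.snoc (α := fun _ => V × V) p e) := by
  constructor
  · intro a
    induction a using Fin.lastCases with
    | last => simpa only [Fin.snoc_last] using he
    | cast j => simpa only [Fin.snoc_castSucc] using hp.1 j
  · intro a b hab
    induction a using Fin.lastCases <;> induction b using Fin.lastCases
    · exact absurd rfl hab
    · simpa only [Fin.snoc_last, Fin.snoc_castSucc] using (hfresh _).symm
    · simpa only [Fin.snoc_last, Fin.snoc_castSucc] using hfresh _
    · simpa only [Fin.snoc_castSucc] using hp.2 fun h => hab (congrArg Fin.castSucc h)

def IsUncovered (p : ι → V × V) (t : V) : Prop :=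
  ∀ j, t ≠ (p j).1 ∧ t ≠ (p j).2

theorem hasMatching_succ_of_adj_uncovered {n : ℕ} {p : Fin n → V × V}
    (hp : IsEdgeMatching G p) (i : Fin n) {u v : V} (hu : IsUncovered p u)
    (hv : IsUncovered p v) (huv : u ≠ v) (hru : G.Adj (p i).1 u) (hsv : G.Adj (p i).2 v) :
    HasMatching G (n + 1) := by
  refine ⟨_, (hp.update i (e := ((p i).1, u)) hru fun j hj => ?_).snoc
    (e := ((p i).2, v)) hsv fun j => ?_⟩
  · exact ⟨(hp.2 hj.symm).1, (hp.2 hj.symm).2.1, (hu j).1, (hu j).2⟩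
  · rcases eq_or_ne j i with rfl | hj
    · simp only [Function.update_self]
      exact ⟨(hp.1 j).ne, (hv j).1.symm, (hu j).2, huv⟩
    · simp only [Function.update_of_ne hj]
      exact ⟨(hp.2 hj).2.1, (hv j).1.symm, (hp.2 hj).2.2.2, (hv j).2.symm⟩

end Matching

theorem forall_not_or_forall_not_or_exists_unique_common {α : Type*} {T A B : α → Prop}
    (h : ∀ u v, T u → T v → A u → B v → u = v) :
    (∀ t, T t → ¬ A t) ∨ (∀ t, T t → ¬ B t) ∨
      ∃ t₀, T t₀ ∧ ∀ t, T t → (A t ↔ t = t₀) ∧ (B t ↔ t = t₀) := by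
  refine or_iff_not_imp_left.2 fun hA => or_iff_not_imp_left.2 fun hB => ?_
  push Not at hA hB
  obtain ⟨u, hu, hAu⟩ := hA
  obtain ⟨v, hv, hBv⟩ := hB
  obtain rfl := h u v hu hv hAu hBv
  exact ⟨u, hu, fun t ht =>
    ⟨⟨fun hAt => h t u ht hu hAt hBv, fun e => e ▸ hAu⟩,
      ⟨fun hBt => (h u t hu ht hAu hBt).symm, fun e => e ▸ hBv⟩⟩⟩

theorem stmt18_general {V : Type*} (G : SimpleGraph V) (k : ℕ)
    (hfree : ¬ HasMatching G k)
    (p : Fin (k - 1) → V × V)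
    (hadj : ∀ i, G.Adj (p i).1 (p i).2)
    (hdisj : ∀ i j, i ≠ j → (p i).1 ≠ (p j).1 ∧ (p i).1 ≠ (p j).2 ∧
      (p i).2 ≠ (p j).1 ∧ (p i).2 ≠ (p j).2) :
    ∀ i : Fin (k - 1),
      (∀ t : V, (∀ j, t ≠ (p j).1 ∧ t ≠ (p j).2) → ¬ G.Adj (p i).1 t) ∨
      (∀ t : V, (∀ j, t ≠ (p j).1 ∧ t ≠ (p j).2) → ¬ G.Adj (p i).2 t) ∨
      (∃ t0 : V, (∀ j, t0 ≠ (p j).1 ∧ t0 ≠ (p j).2) ∧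
        ∀ t : V, (∀ j, t ≠ (p j).1 ∧ t ≠ (p j).2) →
          (G.Adj (p i).1 t ↔ t = t0) ∧ (G.Adj (p i).2 t ↔ t = t0)) := by
  intro i
  have hk : k - 1 + 1 = k := by have := i.pos; omega
  apply forall_not_or_forall_not_or_exists_unique_common (T := IsUncovered p)
  intro u v hu hv hru hsv
  by_contra huv
  exact hfree (hk ▸ hasMatching_succ_of_adj_uncovered ⟨hadj, hdisj⟩ i hu hv huv hru hsv)

/-- if `G` is `kK₂`-free (`k ≥ 2`) with matching edges `r_is_i` and
`T = V(G) \ (R ∪ S)`, then for each `i`, either `N(r_i) ∩ T = ∅`, or `N(s_i) ∩ T = ∅`,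
or `N(r_i) ∩ T = N(s_i) ∩ T = {t_i}` for a single vertex `t_i ∈ T`. -/
theorem stmt18 {V : Type*} (G : SimpleGraph V) (k : ℕ) (hk : 2 ≤ k)
    (hfree : ¬ HasMatching G k)
    (p : Fin (k - 1) → V × V)
    (hadj : ∀ i, G.Adj (p i).1 (p i).2)
    (hdisj : ∀ i j, i ≠ j → (p i).1 ≠ (p j).1 ∧ (p i).1 ≠ (p j).2 ∧
      (p i).2 ≠ (p j).1 ∧ (p i).2 ≠ (p j).2) :
    ∀ i : Fin (k - 1),
      (∀ t : V, (∀ j, t ≠ (p j).1 ∧ t ≠ (p j).2) → ¬ G.Adj (p i).1 t) ∨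
      (∀ t : V, (∀ j, t ≠ (p j).1 ∧ t ≠ (p j).2) → ¬ G.Adj (p i).2 t) ∨
      (∃ t0 : V, (∀ j, t0 ≠ (p j).1 ∧ t0 ≠ (p j).2) ∧
        ∀ t : V, (∀ j, t ≠ (p j).1 ∧ t ≠ (p j).2) →
          (G.Adj (p i).1 t ↔ t = t0) ∧ (G.Adj (p i).2 t ↔ t = t0)) :=
  stmt18_general G k hfree p hadj hdisj
end
end

section
/- For all real n and k with k ≥ 2 and n ≥ 2k^2 - 4k + 3, one has (n + 2k - 2 + sqrt((n+2k-2)^2 - 8k(k-1)))/2 ≥ n + 2k - 2 - 2k(k-1)/(n + 2k - 3). -/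
open Matrix

noncomputable section
open scoped Classical

/-- `(s + √(s² - 4c))/2` is the larger root of `x² - s x + c`. -/
theorem sub_div_le_largest_root {s c : ℝ} (hc : 0 ≤ c) (hcs : c ≤ s - 1) :
    s - c / (s - 1) ≤ (s + √(s ^ 2 - 4 * c)) / 2 := by
  suffices h : s - 2 * c / (s - 1) ≤ √(s ^ 2 - 4 * c) by
    rw [mul_div_assoc] at h
    linarith
  refine (le_abs_self _).trans (Real.abs_le_sqrt ?_)
  rcases (hc.trans hcs).eq_or_lt with ht | ht
  · have hc0 : c = 0 := by linarith
    simp [hc0]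
  · have key : s ^ 2 - 4 * c - (s - 2 * c / (s - 1)) ^ 2 = 4 * c * (s - 1 - c) / (s - 1) ^ 2 := by
      field_simp [ht.ne']
      ring
    have : 0 ≤ 4 * c * (s - 1 - c) / (s - 1) ^ 2 := by
      have hgap := sub_nonneg.2 hcs
      positivity
    linarith

/-- the algebraic inequality
`(n + 2k - 2 + √((n+2k-2)² - 8k(k-1)))/2 ≥ n + 2k - 2 - 2k(k-1)/(n + 2k - 3)`
for real `k ≥ 2` and `n ≥ 2k² - 4k + 3`. -/
theorem stmt19 (n k : ℝ) (hk : 2 ≤ k) (hn : 2 * k ^ 2 - 4 * k + 3 ≤ n) :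
    n + 2 * k - 2 - 2 * k * (k - 1) / (n + 2 * k - 3) ≤
      (n + 2 * k - 2 + Real.sqrt ((n + 2 * k - 2) ^ 2 - 8 * k * (k - 1))) / 2 := by
  have h := sub_div_le_largest_root (s := n + 2 * k - 2) (c := 2 * k * (k - 1))
    (by nlinarith) (by nlinarith)
  rwa [show n + 2 * k - 2 - 1 = n + 2 * k - 3 by ring,
    show 4 * (2 * k * (k - 1)) = 8 * k * (k - 1) by ring] at h

end
end
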